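/- For any DSE Φ of multiplicity n on a standard probability space and any ε > 0, there exists a piece θ : A → B (a partial isomorphism in [[E]] with graph(θ) contained in the support of M(Φ)) such that μ(A) > 1 − ε. -/

import Mathlib

/-!
Think of a piece `P` as a partial matching in the `n`-regular bipartite graphing formed by the
maps `f i`, and let `reach j` be the set of points reached from the unmatched set `Aᶜ` by
alternating paths of length at most `j`. Regularity bounds `μ (reach j)` by the measure of its
neighbourhood; the part of that neighbourhood matched by `θ` pulls back into `reach (j + 1)`, and
the rest consists of ends of augmenting paths. So if `μ Aᶜ ≥ η`, `reach` cannot keep growing by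
`η` for `2 / η` steps, and augmenting paths of bounded length start on a set of measure bounded
below in terms of `η` alone. Shortest augmenting paths visit distinct points, and a greedy
measurable selection makes the paths starting from a subset `T` of proportional measure pairwise
disjoint; flipping `θ` along them enlarges `A` by `μ T`. Iterating this uniform gain from the
empty piece would exceed measure `1`.
-/

open MeasureTheory
open scoped ENNReal

/-- A measure-preserving partial isomorphism with domain `A`, given by the restriction of
`f` to `A`, whose graph is contained in the equivalence relation `E` (an element of `[[E]]`). -/
def IsPartialIso {X : Type*} [MeasurableSpace X] (μ : Measure X) (E : Set (X × X))
    (A : Set X) (f : X → X) : Prop :=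
  MeasurableSet A ∧ Measurable f ∧ Set.InjOn f A ∧ MeasurableSet (f '' A) ∧
    (∀ x ∈ A, (x, f x) ∈ E) ∧
    ∀ s ⊆ A, MeasurableSet s → μ (f '' s) = μ s

open Set

theorem ENNReal.exists_le_card_mul_of_le_sum {ι : Type*} {s : Finset ι} {g : ι → ℝ≥0∞}
    {t : ℝ≥0∞} (ht : t ≠ 0) (h : t ≤ ∑ i ∈ s, g i) : ∃ i ∈ s, t ≤ s.card * g i := by
  obtain ⟨i, hi, hmax⟩ := s.exists_max_image g <| Finset.nonempty_iff_ne_empty.2 fun hs =>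
    ht (by simpa [hs] using h)
  exact ⟨i, hi, h.trans <| (Finset.sum_le_card_nsmul s g (g i) hmax).trans_eq (nsmul_eq_mul _ _)⟩

theorem List.mem_inits_toFinset {α : Type*} [DecidableEq α] {u w : List α} :
    u ∈ w.inits.toFinset ↔ u <+: w :=
  List.mem_toFinset.trans (List.mem_inits _ _)

section MeasurePreservingInjOn

variable {X : Type*} [MeasurableSpace X]

structure MeasurePreservingInjOn (μ : Measure X) (g : X → X) (S : Set X) : Prop where
  measurable : Measurable g
  injOn : InjOn g S
  measure_image : ∀ s ⊆ S, MeasurableSet s → μ (g '' s) = μ s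

namespace MeasurePreservingInjOn

variable {μ : Measure X} {g h : X → X} {S T s : Set X}

theorem id_univ : MeasurePreservingInjOn μ id univ :=
  ⟨measurable_id, injOn_id _, fun s _ _ => by rw [image_id]⟩

theorem mono (hg : MeasurePreservingInjOn μ g S) (hTS : T ⊆ S) : MeasurePreservingInjOn μ g T :=
  ⟨hg.measurable, hg.injOn.mono hTS, fun s hs => hg.measure_image s (hs.trans hTS)⟩

variable [StandardBorelSpace X]

theorem measurableSet_image (hg : MeasurePreservingInjOn μ g S) (hsS : s ⊆ S)
    (hs : MeasurableSet s) : MeasurableSet (g '' s) :=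
  hs.image_of_measurable_injOn hg.measurable (hg.injOn.mono hsS)

theorem comp (hh : MeasurePreservingInjOn μ h T) (hg : MeasurePreservingInjOn μ g S)
    (hgST : MapsTo g S T) : MeasurePreservingInjOn μ (h ∘ g) S where
  measurable := hh.measurable.comp hg.measurable
  injOn := hh.injOn.comp hg.injOn hgST
  measure_image s hsS hs := by
    rw [image_comp, hh.measure_image _ ((image_mono hsS).trans hgST.image_subset)
      (hg.measurableSet_image hsS hs), hg.measure_image s hsS hs]

theorem of_leftInvOn (hg : MeasurePreservingInjOn μ g S) {g' : X → X} (hg' : Measurable g')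
    (hinv : LeftInvOn g' g S) : MeasurePreservingInjOn μ g' (g '' S) where
  measurable := hg'
  injOn := hinv.rightInvOn_image.injOn
  measure_image t htS ht := by
    have hsub : g' '' t ⊆ S := by
      rintro _ ⟨y, hy, rfl⟩
      obtain ⟨x, hx, rfl⟩ := htS hy
      rwa [hinv hx]
    have himg : g '' (g' '' t) = t := by
      rw [image_image]
      exact (image_congr fun y hy => hinv.rightInvOn_image (htS hy)).trans (image_id t)
    rw [← hg.measure_image _ hsub (ht.image_of_measurable_injOn hg'
      (hinv.rightInvOn_image.injOn.mono htS)), himg]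

end MeasurePreservingInjOn

theorem exists_measurable_leftInvOn [StandardBorelSpace X] [Nonempty X] {A : Set X} {θ : X → X}
    (hA : MeasurableSet A) (hθ : Measurable θ) (hinj : InjOn θ A) :
    ∃ g : X → X, Measurable g ∧ LeftInvOn g θ A := by
  have := hA.standardBorel
  have he : MeasurableEmbedding (A.domRestrict θ) :=
    (hθ.comp measurable_subtype_coe).measurableEmbedding (injOn_iff_injective.mp hinj)
  obtain ⟨g, hg, hgθ⟩ := he.exists_measurable_extend measurable_subtype_coe fun _ => inferInstance
  exact ⟨g, hg, fun x hx => congrFun hgθ ⟨x, hx⟩⟩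

end MeasurePreservingInjOn

namespace IsPartialIso

variable {X : Type*} [MeasurableSpace X] {μ : Measure X} {E : Set (X × X)} {A B : Set X}
  {g : X → X}

theorem measurableSet (h : IsPartialIso μ E A g) : MeasurableSet A := h.1

theorem measurable (h : IsPartialIso μ E A g) : Measurable g := h.2.1

theorem injOn (h : IsPartialIso μ E A g) : InjOn g A := h.2.2.1

theorem measurableSet_image (h : IsPartialIso μ E A g) : MeasurableSet (g '' A) := h.2.2.2.1

theorem graph_mem (h : IsPartialIso μ E A g) : ∀ x ∈ A, (x, g x) ∈ E := h.2.2.2.2.1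

theorem measure_image (h : IsPartialIso μ E A g) : ∀ s ⊆ A, MeasurableSet s → μ (g '' s) = μ s :=
  h.2.2.2.2.2

theorem toMeasurePreservingInjOn (h : IsPartialIso μ E A g) : MeasurePreservingInjOn μ g A :=
  ⟨h.measurable, h.injOn, h.measure_image⟩

theorem empty : IsPartialIso μ E ∅ id :=
  ⟨.empty, measurable_id, injOn_empty _, by simp, by simp, fun s hs _ => by
    simp [subset_empty_iff.1 hs]⟩

variable [StandardBorelSpace X]

theorem mono (h : IsPartialIso μ E A g) (hB : MeasurableSet B) (hBA : B ⊆ A) :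
    IsPartialIso μ E B g :=
  ⟨hB, h.measurable, h.injOn.mono hBA, hB.image_of_measurable_injOn h.measurable
    (h.injOn.mono hBA),
    fun x hx => h.graph_mem x (hBA hx), fun s hs => h.measure_image s (hs.trans hBA)⟩

theorem union_piecewise {A₁ A₂ G : Set X} {g₁ g₂ : X → X} [DecidablePred (· ∈ G)]
    (h₁ : IsPartialIso μ E A₁ g₁) (h₂ : IsPartialIso μ E A₂ g₂) (hG : MeasurableSet G)
    (hA₁ : A₁ ⊆ G) (hA₂ : Disjoint A₂ G) (himg : Disjoint (g₁ '' A₁) (g₂ '' A₂)) :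
    IsPartialIso μ E (A₁ ∪ A₂) (G.piecewise g₁ g₂) := by
  have eq₁ : EqOn (G.piecewise g₁ g₂) g₁ A₁ := fun x hx => piecewise_eq_of_mem _ _ _ (hA₁ hx)
  have eq₂ : EqOn (G.piecewise g₁ g₂) g₂ A₂ := fun x hx =>
    piecewise_eq_of_notMem _ _ _ (hA₂.notMem_of_mem_left hx)
  have himage : ∀ s ⊆ A₁ ∪ A₂,
      G.piecewise g₁ g₂ '' s = g₁ '' (s ∩ A₁) ∪ g₂ '' (s ∩ A₂) := by
    intro s hs
    rw [← (eq₁.mono inter_subset_right).image_eq, ← (eq₂.mono inter_subset_right).image_eq,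
      ← image_union, ← inter_union_distrib_left, inter_eq_left.2 hs]
  have hdisj : ∀ s ⊆ A₁ ∪ A₂, Disjoint (g₁ '' (s ∩ A₁)) (g₂ '' (s ∩ A₂)) := fun s _ =>
    himg.mono (image_mono inter_subset_right) (image_mono inter_subset_right)
  refine ⟨h₁.measurableSet.union h₂.measurableSet, h₁.measurable.piecewise hG h₂.measurable,
    ?_, ?_, ?_, ?_⟩
  · rw [injOn_union (hA₂.mono_right hA₁ |>.symm)]
    refine ⟨eq₁.injOn_iff.2 h₁.injOn, eq₂.injOn_iff.2 h₂.injOn, fun x hx y hy hxy =>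
      himg.ne_of_mem ⟨x, hx, rfl⟩ ⟨y, hy, rfl⟩ ?_⟩
    rwa [← eq₁ hx, ← eq₂ hy]
  · rw [himage _ subset_rfl, union_inter_cancel_left, union_inter_cancel_right]
    exact h₁.measurableSet_image.union h₂.measurableSet_image
  · rintro x (hx | hx)
    · rw [eq₁ hx]; exact h₁.graph_mem x hx
    · rw [eq₂ hx]; exact h₂.graph_mem x hx
  · intro s hs hms
    have hm₁ := hms.inter h₁.measurableSet
    have hm₂ := hms.inter h₂.measurableSet
    rw [himage s hs, measure_union (hdisj s hs)
        (hm₂.image_of_measurable_injOn h₂.measurable (h₂.injOn.mono inter_subset_right)),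
      h₁.measure_image _ inter_subset_right hm₁, h₂.measure_image _ inter_subset_right hm₂,
      ← measure_union ((hA₂.mono_right hA₁).symm.mono inter_subset_right inter_subset_right) hm₂,
      ← inter_union_distrib_left, inter_eq_left.2 hs]

end IsPartialIso

section Collision

variable {X ι : Type*} {c : ι → X → X} {I : Finset ι} {S T T' : Set X}

def CollisionFree (c : ι → X → X) (I : Finset ι) (T : Set X) : Prop :=
  ∀ a ∈ I, ∀ b ∈ I, a ≠ b → ∀ x ∈ T, ∀ y ∈ T, c a x ≠ c b y

def collisionNbhd (c : ι → X → X) (I : Finset ι) (S T : Set X) : Set X :=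
  S ∩ ⋃ a ∈ I, ⋃ b ∈ I, ⋃ (_ : a ≠ b), c a ⁻¹' (c b '' T)

theorem mem_collisionNbhd {x : X} : x ∈ collisionNbhd c I S T ↔
    x ∈ S ∧ ∃ a ∈ I, ∃ b ∈ I, a ≠ b ∧ ∃ y ∈ T, c b y = c a x := by
  simp only [collisionNbhd, mem_inter_iff, mem_iUnion, mem_preimage, mem_image, exists_prop]

theorem collisionNbhd_mono (h : T ⊆ T') : collisionNbhd c I S T ⊆ collisionNbhd c I S T' :=
  inter_subset_inter_right _ <| iUnion₂_mono fun _ _ => iUnion₂_mono fun _ _ =>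
    iUnion_mono fun _ => preimage_mono (image_mono h)

theorem CollisionFree.mono (h : CollisionFree c I T) (hT' : T' ⊆ T) : CollisionFree c I T' :=
  fun a ha b hb hab x hx y hy => h a ha b hb hab x (hT' hx) y (hT' hy)

theorem CollisionFree.union (h : CollisionFree c I T) (h' : CollisionFree c I T')
    (hT' : T' ⊆ S) (hdisj : Disjoint T' (collisionNbhd c I S T)) :
    CollisionFree c I (T ∪ T') := by
  have hno : ∀ a ∈ I, ∀ b ∈ I, a ≠ b → ∀ x ∈ T, ∀ y ∈ T', c a x ≠ c b y :=
    fun a ha b hb hab x hx y hy hxy => hdisj.notMem_of_mem_left hy <|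
      mem_collisionNbhd.2 ⟨hT' hy, b, hb, a, ha, hab.symm, x, hx, hxy⟩
  rintro a ha b hb hab x (hx | hx) y (hy | hy)
  · exact h a ha b hb hab x hx y hy
  · exact hno a ha b hb hab x hx y hy
  · exact (hno b hb a ha hab.symm y hy x hx).symm
  · exact h' a ha b hb hab x hx y hy

theorem CollisionFree.iUnion_of_monotone {T : ℕ → Set X} (hmono : Monotone T)
    (h : ∀ k, CollisionFree c I (T k)) : CollisionFree c I (⋃ k, T k) := by
  intro a ha b hb hab x hx y hy
  obtain ⟨k, hxk⟩ := mem_iUnion.1 hx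
  obtain ⟨l, hyl⟩ := mem_iUnion.1 hy
  exact h (max k l) a ha b hb hab x (hmono (le_max_left k l) hxk) y
    (hmono (le_max_right k l) hyl)

def greedyCollisionFree (c : ι → X → X) (I : Finset ι) (S : Set X) (D : ℕ → Set X) :
    ℕ → Set X
  | 0 => ∅
  | k + 1 => greedyCollisionFree c I S D k ∪
      (D k \ collisionNbhd c I S (greedyCollisionFree c I S D k))

variable [MeasurableSpace X] [StandardBorelSpace X] {μ : Measure X}

theorem measurableSet_collisionNbhd (hS : MeasurableSet S)
    (hc : ∀ a ∈ I, MeasurePreservingInjOn μ (c a) S) (hTS : T ⊆ S) (hT : MeasurableSet T) :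
    MeasurableSet (collisionNbhd c I S T) :=
  hS.inter <| I.measurableSet_biUnion fun a ha => I.measurableSet_biUnion fun b hb =>
    .iUnion fun _ => (hc a ha).measurable ((hc b hb).measurableSet_image hTS hT)

theorem measure_collisionNbhd_le (hS : MeasurableSet S)
    (hc : ∀ a ∈ I, MeasurePreservingInjOn μ (c a) S) (hTS : T ⊆ S) (hT : MeasurableSet T) :
    μ (collisionNbhd c I S T) ≤ I.card ^ 2 * μ T := by
  have hpair : ∀ a ∈ I, ∀ b ∈ I, μ (S ∩ c a ⁻¹' (c b '' T)) ≤ μ T := fun a ha b hb => by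
    have hm := (hc b hb).measurableSet_image hTS hT
    calc μ (S ∩ c a ⁻¹' (c b '' T))
        = μ (c a '' (S ∩ c a ⁻¹' (c b '' T))) :=
          ((hc a ha).measure_image _ inter_subset_left (hS.inter ((hc a ha).measurable hm))).symm
      _ ≤ μ (c b '' T) :=
          measure_mono <| (image_mono inter_subset_right).trans (image_preimage_subset _ _)
      _ = μ T := (hc b hb).measure_image T hTS hT
  calc μ (collisionNbhd c I S T)
      ≤ μ (⋃ a ∈ I, ⋃ b ∈ I, S ∩ c a ⁻¹' (c b '' T)) := by
        refine measure_mono fun x hx => ?_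
        obtain ⟨hxS, a, ha, b, hb, -, y, hy, hxy⟩ := mem_collisionNbhd.1 hx
        exact mem_biUnion ha <| mem_biUnion hb ⟨hxS, y, hy, hxy⟩
    _ ≤ ∑ a ∈ I, ∑ b ∈ I, μ (S ∩ c a ⁻¹' (c b '' T)) :=
        (measure_biUnion_finset_le _ _).trans <| Finset.sum_le_sum fun a _ =>
          measure_biUnion_finset_le _ _
    _ ≤ ∑ _a ∈ I, ∑ _b ∈ I, μ T :=
        Finset.sum_le_sum fun a ha => Finset.sum_le_sum fun b hb => hpair a ha b hb
    _ = I.card ^ 2 * μ T := by simp [sq, mul_assoc]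

theorem exists_collisionFree_cover (hS : MeasurableSet S)
    (hc : ∀ a ∈ I, MeasurePreservingInjOn μ (c a) S) (hself : ∀ x ∈ S, CollisionFree c I {x}) :
    ∃ D : ℕ → Set X, (∀ k, MeasurableSet (D k) ∧ D k ⊆ S ∧ CollisionFree c I (D k)) ∧
      S ⊆ ⋃ k, D k := by
  -- separate `x` from its finitely many collision partners by a basic open set, through a Borel
  -- embedding into `ℝ`
  obtain ⟨e, he⟩ := exists_measurableEmbedding_real X
  have hbasis := TopologicalSpace.isBasis_countableBasis ℝ
  obtain ⟨v, hv⟩ := (TopologicalSpace.countable_countableBasis ℝ).exists_eq_range <|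
    let ⟨u, hu, _⟩ := hbasis.exists_subset_of_mem_open (mem_univ (0 : ℝ)) isOpen_univ; ⟨u, hu⟩
  rw [hv] at hbasis
  have hvm : ∀ k, MeasurableSet (S ∩ e ⁻¹' v k) := fun k =>
    hS.inter <| he.measurable (hbasis.isOpen (mem_range_self k)).measurableSet
  let R k := S ∩ e ⁻¹' v k
  refine ⟨fun k => R k \ collisionNbhd c I S (R k), fun k => ⟨
    (hvm k).diff (measurableSet_collisionNbhd hS hc inter_subset_left (hvm k)),
    sdiff_subset.trans inter_subset_left, fun a ha b hb hab x hx y hy hxy =>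
      hx.2 (mem_collisionNbhd.2 ⟨hx.1.1, a, ha, b, hb, hab, y, hy.1, hxy.symm⟩)⟩, ?_⟩
  intro x hx
  set F := {y ∈ S | ∃ a ∈ I, ∃ b ∈ I, a ≠ b ∧ c b y = c a x}
  have hF : F.Finite := by
    refine (I.finite_toSet.biUnion fun a _ => I.finite_toSet.biUnion fun b hb =>
      Subsingleton.finite (s := S ∩ c b ⁻¹' {c a x}) ?_).subset ?_
    · exact fun y hy z hz => (hc b hb).injOn hy.1 hz.1 (hy.2.trans hz.2.symm)
    · rintro y ⟨hy, a, ha, b, hb, -, hyx⟩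
      exact mem_biUnion ha <| mem_biUnion hb ⟨hy, hyx⟩
  have hxF : e x ∉ e '' F := by
    rintro ⟨y, ⟨-, a, ha, b, hb, hab, hyx⟩, hxy⟩
    rw [he.injective hxy] at hyx
    exact hself x hx b hb a ha (Ne.symm hab) x rfl x rfl hyx
  obtain ⟨_, ⟨k, rfl⟩, hxk, hkF⟩ := hbasis.exists_subset_of_mem_open hxF
    (hF.image e).isClosed.isOpen_compl
  refine mem_iUnion.2 ⟨k, ⟨hx, hxk⟩, fun hxN => ?_⟩
  obtain ⟨-, a, ha, b, hb, hab, y, hy, hyx⟩ := mem_collisionNbhd.1 hxN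
  exact hkF hy.2 ⟨y, ⟨hy.1, a, ha, b, hb, hab, hyx⟩, rfl⟩

theorem exists_collisionFree_subset (hS : MeasurableSet S)
    (hc : ∀ a ∈ I, MeasurePreservingInjOn μ (c a) S) (hself : ∀ x ∈ S, CollisionFree c I {x}) :
    ∃ T ⊆ S, MeasurableSet T ∧ CollisionFree c I T ∧ μ S ≤ (I.card ^ 2 + 1) * μ T := by
  obtain ⟨D, hD, hcover⟩ := exists_collisionFree_cover hS hc hself
  set G := greedyCollisionFree c I S D
  have hG : ∀ k, G k ⊆ S ∧ MeasurableSet (G k) ∧ CollisionFree c I (G k) := by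
    intro k
    induction k with
    | zero => exact ⟨empty_subset _, .empty, fun _ _ _ _ _ x hx => absurd hx (notMem_empty x)⟩
    | succ k ih =>
      obtain ⟨hGS, hGm, hGfree⟩ := ih
      obtain ⟨hDm, hDS, hDfree⟩ := hD k
      exact ⟨union_subset hGS (sdiff_subset.trans hDS),
        hGm.union (hDm.diff (measurableSet_collisionNbhd hS hc hGS hGm)),
        hGfree.union (hDfree.mono sdiff_subset) (sdiff_subset.trans hDS) disjoint_sdiff_left⟩
  set T := ⋃ k, G k
  have hTS : T ⊆ S := iUnion_subset fun k => (hG k).1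
  have hTm : MeasurableSet T := .iUnion fun k => (hG k).2.1
  have hcov : S ⊆ T ∪ collisionNbhd c I S T := by
    intro x hx
    obtain ⟨k, hk⟩ := mem_iUnion.1 (hcover hx)
    by_cases hN : x ∈ collisionNbhd c I S (G k)
    · exact Or.inr (collisionNbhd_mono (subset_iUnion G k) hN)
    · exact Or.inl (mem_iUnion.2 ⟨k + 1, Or.inr ⟨hk, hN⟩⟩)
  refine ⟨T, hTS, hTm, .iUnion_of_monotone (monotone_nat_of_le_succ fun k => subset_union_left)
    fun k => (hG k).2.2, ?_⟩
  calc μ S ≤ μ T + μ (collisionNbhd c I S T) := (measure_mono hcov).trans (measure_union_le _ _)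
    _ ≤ μ T + I.card ^ 2 * μ T := add_le_add le_rfl (measure_collisionNbhd_le hS hc hTS hTm)
    _ = (I.card ^ 2 + 1) * μ T := by ring

end Collision

section RegularFamily

variable {X ι : Type*} [MeasurableSpace X] {μ : Measure X} [Fintype ι]

def HasMultiplicity (μ : Measure X) (S : ι → Set X) (n : ℕ) : Prop :=
  ∀ᵐ x ∂μ, ∑ i, (S i).indicator (fun _ => (1 : ℝ≥0∞)) x = (n : ℝ≥0∞)

theorem sum_measure_inter_eq_mul {S : ι → Set X} {n : ℕ} (hS : ∀ i, MeasurableSet (S i))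
    (hcount : HasMultiplicity μ S n) (U : Set X) :
    ∑ i, μ (U ∩ S i) = n * μ U := by
  calc ∑ i, μ (U ∩ S i)
      = ∑ i, ∫⁻ x in U, (S i).indicator (fun _ => (1 : ℝ≥0∞)) x ∂μ := by
        refine Finset.sum_congr rfl fun i _ => ?_
        rw [lintegral_indicator (hS i), setLIntegral_one, Measure.restrict_apply (hS i),
          inter_comm]
    _ = ∫⁻ x in U, ∑ i, (S i).indicator (fun _ => (1 : ℝ≥0∞)) x ∂μ :=
        (lintegral_finsetSum _ fun i _ => measurable_one.indicator (hS i)).symm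
    _ = n * μ U := by rw [lintegral_congr_ae (ae_restrict_of_ae hcount), setLIntegral_const]

def neighbors (Adom : ι → Set X) (f : ι → X → X) (U : Set X) : Set X :=
  ⋃ i, f i '' (U ∩ Adom i)

theorem measure_le_measure_neighbors [StandardBorelSpace X] {Adom : ι → Set X}
    {f : ι → X → X} {n : ℕ} (hn : n ≠ 0) (hA : ∀ i, MeasurableSet (Adom i))
    (hf : ∀ i, MeasurePreservingInjOn μ (f i) (Adom i))
    (hrow : HasMultiplicity μ Adom n) (hcol : HasMultiplicity μ (fun i => f i '' Adom i) n)
    {U : Set X} (hU : MeasurableSet U) : μ U ≤ μ (neighbors Adom f U) := by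
  refine (ENNReal.mul_le_mul_iff_right (Nat.cast_ne_zero.2 hn) (ENNReal.natCast_ne_top n)).1 ?_
  rw [← sum_measure_inter_eq_mul hA hrow U,
    ← sum_measure_inter_eq_mul (fun i => (hf i).measurableSet_image subset_rfl (hA i)) hcol _]
  refine Finset.sum_le_sum fun i _ => ?_
  rw [← (hf i).measure_image _ inter_subset_right (hU.inter (hA i))]
  exact measure_mono (subset_inter (subset_iUnion (fun i => f i '' (U ∩ Adom i)) i)
    (image_mono inter_subset_right))

end RegularFamily

section Piece

variable {X : Type*} [MeasurableSpace X] {μ : Measure X} {E : Set (X × X)} {m : ℕ}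
  {Adom : Fin m → Set X} {f : Fin m → X → X}

structure Piece (μ : Measure X) (E : Set (X × X)) (Adom : Fin m → Set X)
    (f : Fin m → X → X) where
  A : Set X
  θ : X → X
  isPartialIso : IsPartialIso μ E A θ
  subordinate : ∀ x ∈ A, ∃ i, x ∈ Adom i ∧ f i x = θ x

noncomputable def words (m K : ℕ) : Finset (List (Fin m)) :=
  (List.finite_length_le (Fin m) K).toFinset

@[simp] theorem mem_words {K : ℕ} {w : List (Fin m)} : w ∈ words m K ↔ w.length ≤ K :=
  Set.Finite.mem_toFinset _

noncomputable def augIndex (m K : ℕ) : Finset (List (Fin m) × Fin m) :=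
  words m K ×ˢ Finset.univ

@[simp] theorem mem_augIndex {K : ℕ} {p : List (Fin m) × Fin m} :
    p ∈ augIndex m K ↔ p.1.length ≤ K := by
  simp [augIndex]

theorem augIndex_mono : Monotone (augIndex m) := fun _ _ h _ hp =>
  mem_augIndex.2 ((mem_augIndex.1 hp).trans h)

namespace Piece

variable (P : Piece μ E Adom f)

def B : Set X := P.θ '' P.A

def empty : Piece μ E Adom f := ⟨∅, id, .empty, fun _ hx => absurd hx (notMem_empty _)⟩

theorem measurableSet_A : MeasurableSet P.A := P.isPartialIso.measurableSet

theorem measurableSet_B : MeasurableSet P.B := P.isPartialIso.measurableSet_image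

theorem θ_notMem_B_of_eqOn {P P' : Piece μ E Adom f} {G : Set X} {g : X → X}
    (hA : P'.A = P.A) (hG : EqOn P'.θ g G) (hθ : EqOn P'.θ P.θ (P.A \ G))
    (hgG : g '' G ⊆ P.Bᶜ) {z : X} (hz : z ∈ G) (hzA : z ∈ P.A) : P.θ z ∉ P'.B := by
  rintro ⟨y, hyA, hy⟩
  rw [hA] at hyA
  by_cases hyG : y ∈ G
  · exact hgG ⟨y, hyG, rfl⟩ (hG hyG ▸ hy ▸ ⟨z, hzA, rfl⟩)
  · rw [hθ ⟨hyA, hyG⟩] at hy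
    exact hyG (P.isPartialIso.injOn hyA hzA hy ▸ hz)

variable [StandardBorelSpace X]

theorem exists_glue {i : Fin m} (hf : IsPartialIso μ E (Adom i) (f i)) {G : Set X}
    (hG : MeasurableSet G) (hGA : G ⊆ Adom i) (hdisj : Disjoint (f i '' G) (P.θ '' (P.A \ G))) :
    ∃ P' : Piece μ E Adom f, P'.A = G ∪ P.A ∧ EqOn P'.θ (f i) G ∧ EqOn P'.θ P.θ (P.A \ G) := by
  classical
  refine ⟨⟨G ∪ P.A \ G, G.piecewise (f i) P.θ, (hf.mono hG hGA).union_piecewise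
    (P.isPartialIso.mono (P.measurableSet_A.diff hG) sdiff_subset) hG subset_rfl
    disjoint_sdiff_left hdisj, ?_⟩, union_sdiff_self, fun x hx => piecewise_eq_of_mem _ _ _ hx,
    fun x hx => piecewise_eq_of_notMem _ _ _ hx.2⟩
  rintro x (hx | hx)
  · exact ⟨i, hGA hx, (piecewise_eq_of_mem _ _ _ hx).symm⟩
  · obtain ⟨j, hj, hjx⟩ := P.subordinate x hx.1
    exact ⟨j, hj, by rw [piecewise_eq_of_notMem _ _ _ hx.2, hjx]⟩

variable [Nonempty X]

theorem exists_inv : ∃ g : X → X, Measurable g ∧ LeftInvOn g P.θ P.A :=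
  exists_measurable_leftInvOn P.measurableSet_A P.isPartialIso.measurable P.isPartialIso.injOn

noncomputable def inv : X → X := P.exists_inv.choose

theorem leftInvOn_inv : LeftInvOn P.inv P.θ P.A := P.exists_inv.choose_spec.2

theorem measurePreservingInjOn_inv : MeasurePreservingInjOn μ P.inv P.B :=
  P.isPartialIso.toMeasurePreservingInjOn.of_leftInvOn P.exists_inv.choose_spec.1
    P.leftInvOn_inv

theorem inv_mem {y : X} (hy : y ∈ P.B) : P.inv y ∈ P.A := by
  obtain ⟨x, hx, rfl⟩ := hy
  rwa [P.leftInvOn_inv hx]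

theorem θ_inv {y : X} (hy : y ∈ P.B) : P.θ (P.inv y) = y :=
  P.leftInvOn_inv.rightInvOn_image hy

noncomputable def chain : List (Fin m) → X → X
  | [], x => x
  | i :: w, x => chain w (P.inv (f i x))

def chainDom : List (Fin m) → Set X
  | [] => univ
  | i :: w => Adom i ∩ f i ⁻¹' P.B ∩ (P.inv ∘ f i) ⁻¹' chainDom w

@[simp] theorem chain_nil (x : X) : P.chain [] x = x := rfl

@[simp] theorem chainDom_nil : P.chainDom [] = univ := rfl

@[simp] theorem chain_cons (i : Fin m) (w : List (Fin m)) (x : X) :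
    P.chain (i :: w) x = P.chain w (P.inv (f i x)) := rfl

theorem mem_chainDom_cons {i : Fin m} {w : List (Fin m)} {x : X} : x ∈ P.chainDom (i :: w) ↔
    x ∈ Adom i ∧ f i x ∈ P.B ∧ P.inv (f i x) ∈ P.chainDom w := by
  simp [chainDom, and_assoc]

theorem chain_append (u v : List (Fin m)) (x : X) :
    P.chain (u ++ v) x = P.chain v (P.chain u x) := by
  induction u generalizing x with
  | nil => rfl
  | cons i u ih => exact ih _

theorem chainDom_append (u v : List (Fin m)) :
    P.chainDom (u ++ v) = P.chainDom u ∩ P.chain u ⁻¹' P.chainDom v := by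
  ext x
  induction u generalizing x with
  | nil => simp
  | cons i u ih =>
    simp only [List.cons_append, mem_chainDom_cons, ih, mem_inter_iff, mem_preimage, chain_cons,
      and_assoc]

theorem chainDom_subset_of_prefix {u v : List (Fin m)} (h : u <+: v) :
    P.chainDom v ⊆ P.chainDom u := by
  obtain ⟨r, rfl⟩ := h
  rw [chainDom_append]
  exact inter_subset_left

theorem measurePreservingInjOn_chain (hf : ∀ i, IsPartialIso μ E (Adom i) (f i))
    (w : List (Fin m)) : MeasurePreservingInjOn μ (P.chain w) (P.chainDom w) := by
  induction w with
  | nil => exact .id_univ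
  | cons i w ih =>
    have hstep := P.measurePreservingInjOn_inv.comp
      ((hf i).toMeasurePreservingInjOn.mono (inter_subset_left (t := f i ⁻¹' P.B)))
      fun x hx => hx.2
    exact ih.comp (hstep.mono inter_subset_left) fun x hx => hx.2

theorem measurableSet_chainDom (hf : ∀ i, IsPartialIso μ E (Adom i) (f i)) (w : List (Fin m)) :
    MeasurableSet (P.chainDom w) := by
  induction w with
  | nil => exact .univ
  | cons i w ih =>
    exact ((hf i).measurableSet.inter ((hf i).measurable P.measurableSet_B)).inter
      ((P.measurePreservingInjOn_inv.measurable.comp (hf i).measurable) ih)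

theorem chain_congr {P P' : Piece μ E Adom f} {G : Set X} (hA : P.A ⊆ P'.A)
    (hθ : EqOn P'.θ P.θ (P.A \ G)) {w : List (Fin m)} {x : X} (hx : x ∈ P.chainDom w)
    (hG : ∀ u, u <+: w → P.chain u x ∉ G) :
    x ∈ P'.chainDom w ∧ P'.chain w x = P.chain w x := by
  induction w generalizing x with
  | nil => exact ⟨mem_univ x, rfl⟩
  | cons i w ih =>
    obtain ⟨hi, hB, hw⟩ := P.mem_chainDom_cons.1 hx
    have hxA : P.inv (f i x) ∈ P.A := P.inv_mem hB
    have hθx : P'.θ (P.inv (f i x)) = f i x := by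
      rw [hθ ⟨hxA, hG [i] (List.prefix_cons_inj i |>.2 List.nil_prefix)⟩, P.θ_inv hB]
    have hinv : P'.inv (f i x) = P.inv (f i x) := by
      simpa only [hθx] using P'.leftInvOn_inv (hA hxA)
    obtain ⟨hdom, hchain⟩ := ih hw fun u hu => hG (i :: u) (List.prefix_cons_inj i |>.2 hu)
    refine ⟨P'.mem_chainDom_cons.2 ⟨hi, ⟨_, hA hxA, hθx⟩, hinv ▸ hdom⟩, ?_⟩
    rw [chain_cons, chain_cons, hinv, hchain]

-- starting points of augmenting paths with letters `w ++ [i]`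
def augStarts (w : List (Fin m)) (i : Fin m) : Set X :=
  P.Aᶜ ∩ P.chainDom w ∩ P.chain w ⁻¹' (Adom i ∩ f i ⁻¹' P.Bᶜ)

theorem mem_augStarts {w : List (Fin m)} {i : Fin m} {x : X} : x ∈ P.augStarts w i ↔
    x ∉ P.A ∧ x ∈ P.chainDom w ∧ P.chain w x ∈ Adom i ∧ f i (P.chain w x) ∉ P.B := by
  simp [augStarts, and_assoc]

theorem measurableSet_augStarts (hf : ∀ i, IsPartialIso μ E (Adom i) (f i))
    (w : List (Fin m)) (i : Fin m) : MeasurableSet (P.augStarts w i) :=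
  (P.measurableSet_A.compl.inter (P.measurableSet_chainDom hf w)).inter
    ((P.measurePreservingInjOn_chain hf w).measurable
      ((hf i).measurableSet.inter ((hf i).measurable P.measurableSet_B.compl)))

theorem mem_augStarts_of_chain_eq {u v r : List (Fin m)} {i : Fin m} {x : X} (huv : u <+: v)
    (hx : x ∈ P.augStarts (v ++ r) i) (heq : P.chain u x = P.chain v x) :
    x ∈ P.augStarts (u ++ r) i := by
  rw [mem_augStarts, chainDom_append, chain_append] at hx ⊢
  obtain ⟨hxA, ⟨hv, hr⟩, hend⟩ := hx
  exact ⟨hxA, ⟨P.chainDom_subset_of_prefix huv hv, by rwa [mem_preimage, heq]⟩, by rwa [heq]⟩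

def shortestAugStarts (w : List (Fin m)) (i : Fin m) : Set X :=
  P.augStarts w i \ ⋃ (v : List (Fin m)) (_ : v.length < w.length), P.augStarts v i

theorem measurableSet_shortestAugStarts (hf : ∀ i, IsPartialIso μ E (Adom i) (f i))
    (w : List (Fin m)) (i : Fin m) : MeasurableSet (P.shortestAugStarts w i) :=
  (P.measurableSet_augStarts hf w i).diff
    (.iUnion fun v => .iUnion fun _ => P.measurableSet_augStarts hf v i)

theorem exists_mem_shortestAugStarts {w : List (Fin m)} {i : Fin m} {x : X}
    (hx : x ∈ P.augStarts w i) :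
    ∃ v : List (Fin m), v.length ≤ w.length ∧ x ∈ P.shortestAugStarts v i := by
  classical
  have h : ∃ n, ∃ v : List (Fin m), v.length = n ∧ x ∈ P.augStarts v i := ⟨_, w, rfl, hx⟩
  obtain ⟨v, hv, hxv⟩ := Nat.find_spec h
  refine ⟨v, hv ▸ Nat.find_min' h ⟨w, rfl, hx⟩, hxv, ?_⟩
  simp only [mem_iUnion, not_exists]
  exact fun v' hv' hxv' => Nat.find_min h (hv ▸ hv') ⟨v', rfl, hxv'⟩

theorem collisionFree_singleton_of_mem_shortestAugStarts {w : List (Fin m)} {i : Fin m}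
    {x : X} (hx : x ∈ P.shortestAugStarts w i) :
    CollisionFree P.chain w.inits.toFinset {x} := by
  have key : ∀ u v, u <+: w → v <+: w → u.length < v.length → P.chain u x ≠ P.chain v x := by
    intro u v hu hv hlt heq
    obtain ⟨r, rfl⟩ := hv
    refine hx.2 (mem_iUnion₂.2 ⟨u ++ r, ?_, P.mem_augStarts_of_chain_eq
      (List.prefix_of_prefix_length_le hu (List.prefix_append v r) hlt.le) hx.1 heq⟩)
    simpa using hlt
  rintro u hu v hv huv _ rfl _ rfl
  rw [List.mem_inits_toFinset] at hu hv
  rcases lt_trichotomy u.length v.length with hlt | heq | hgt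
  · exact key u v hu hv hlt
  · exact absurd ((List.prefix_of_prefix_length_le hu hv heq.le).eq_of_length heq) huv
  · exact (key v u hv hu hgt).symm

theorem mem_chainDom_append_singleton {w : List (Fin m)} {j : Fin m} {x : X} :
    x ∈ P.chainDom (w ++ [j]) ↔
      x ∈ P.chainDom w ∧ P.chain w x ∈ Adom j ∧ f j (P.chain w x) ∈ P.B := by
  simp [chainDom_append, mem_chainDom_cons]

theorem chain_append_singleton (w : List (Fin m)) (j : Fin m) (x : X) :
    P.chain (w ++ [j]) x = P.inv (f j (P.chain w x)) :=
  P.chain_append w [j] x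

theorem mem_augStarts_append_singleton {w : List (Fin m)} {i j : Fin m} {x : X}
    (hx : x ∈ P.augStarts (w ++ [j]) i) : x ∉ P.A ∧ x ∈ P.chainDom w ∧ P.chain w x ∈ Adom j ∧
      f j (P.chain w x) ∈ P.B ∧ P.chain (w ++ [j]) x ∈ Adom i ∧
      f i (P.chain (w ++ [j]) x) ∉ P.B := by
  obtain ⟨hxA, hdom, hi, hiB⟩ := P.mem_augStarts.1 hx
  obtain ⟨hw, hj, hjB⟩ := P.mem_chainDom_append_singleton.1 hdom
  exact ⟨hxA, hw, hj, hjB, hi, hiB⟩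

theorem exists_augment_last (hf : ∀ i, IsPartialIso μ E (Adom i) (f i)) {w : List (Fin m)}
    {i j : Fin m} {T : Set X} (hT : MeasurableSet T) (hTaug : T ⊆ P.augStarts (w ++ [j]) i)
    (hfree : CollisionFree P.chain (w ++ [j]).inits.toFinset T) :
    ∃ P' : Piece μ E Adom f, P'.A = P.A ∧ T ⊆ P'.augStarts w j ∧
      CollisionFree P'.chain w.inits.toFinset T := by
  have hend := fun x (hx : x ∈ T) => P.mem_augStarts_append_singleton (hTaug hx)
  have hprefix : ∀ u, u <+: w → u ∈ (w ++ [j]).inits.toFinset ∧ u ≠ w ++ [j] := fun u hu =>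
    ⟨List.mem_inits_toFinset.2 (hu.trans (List.prefix_append w [j])), fun h => by
      simpa [h] using hu.length_le⟩
  -- reroute the last points `G` of the paths through `f i`, freeing their old `θ`-images
  set G := P.chain (w ++ [j]) '' T
  have hGA : G ⊆ P.A := image_subset_iff.2 fun x hx => by
    obtain ⟨-, -, -, hjB, -⟩ := hend x hx
    rw [mem_preimage, chain_append_singleton]
    exact P.inv_mem hjB
  have hiG : f i '' G ⊆ P.Bᶜ := by
    rintro _ ⟨_, ⟨x, hx, rfl⟩, rfl⟩
    exact (hend x hx).2.2.2.2.2
  obtain ⟨P', hA', hθG, hθ⟩ := P.exists_glue (hf i) ((P.measurePreservingInjOn_chain hf _)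
    |>.measurableSet_image (fun x hx => (P.mem_augStarts.1 (hTaug hx)).2.1) hT)
    (image_subset_iff.2 fun x hx => (hend x hx).2.2.2.2.1)
    (disjoint_of_subset hiG (image_mono sdiff_subset) disjoint_compl_left)
  rw [union_eq_right.2 hGA] at hA'
  have hagree : ∀ x ∈ T, ∀ u, u <+: w → x ∈ P'.chainDom u ∧ P'.chain u x = P.chain u x :=
    fun x hx u hu => chain_congr hA'.ge hθ (P.chainDom_subset_of_prefix hu (hend x hx).2.1)
      fun v hv ⟨y, hy, hyv⟩ => hfree v (hprefix v (hv.trans hu)).1 (w ++ [j])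
        (List.mem_inits_toFinset.2 (List.prefix_refl _)) (hprefix v (hv.trans hu)).2
        x hx y hy hyv.symm
  refine ⟨P', hA', fun x hx => ?_, fun u hu v hv huv x hx y hy => ?_⟩
  · obtain ⟨hxA, -, hj, hjB, -⟩ := hend x hx
    obtain ⟨hdom, hchain⟩ := hagree x hx w (List.prefix_refl w)
    refine P'.mem_augStarts.2 ⟨hA' ▸ hxA, hdom, hchain ▸ hj, ?_⟩
    rw [hchain, ← P.θ_inv hjB, ← chain_append_singleton]
    exact θ_notMem_B_of_eqOn hA' hθG hθ hiG ⟨x, hx, rfl⟩ (hGA ⟨x, hx, rfl⟩)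
  · rw [List.mem_inits_toFinset] at hu hv
    rw [(hagree x hx u hu).2, (hagree y hy v hv).2]
    exact hfree u (hprefix u hu).1 v (hprefix v hv).1 huv x hx y hy

theorem exists_add_measure_le (hf : ∀ i, IsPartialIso μ E (Adom i) (f i)) {w : List (Fin m)}
    {i : Fin m} {T : Set X} (hT : MeasurableSet T) (hTaug : T ⊆ P.augStarts w i)
    (hfree : CollisionFree P.chain w.inits.toFinset T) :
    ∃ P' : Piece μ E Adom f, μ P.A + μ T ≤ μ P'.A := by
  induction w using List.reverseRecOn generalizing P i with
  | nil =>
    have hT' : ∀ x ∈ T, x ∉ P.A ∧ x ∈ Adom i ∧ f i x ∉ P.B := fun x hx => by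
      simpa using P.mem_augStarts.1 (hTaug hx)
    have hdisj : Disjoint (f i '' T) (P.θ '' (P.A \ T)) := by
      refine disjoint_of_subset ?_ (image_mono sdiff_subset) disjoint_compl_left
      rintro _ ⟨x, hx, rfl⟩
      exact (hT' x hx).2.2
    obtain ⟨P', hA', -⟩ := P.exists_glue (hf i) hT (fun x hx => (hT' x hx).2.1) hdisj
    refine ⟨P', le_of_eq ?_⟩
    rw [hA', measure_union (disjoint_left.2 fun x hx => (hT' x hx).1) P.measurableSet_A,
      add_comm]
  | append_singleton w j ih =>
    obtain ⟨P₁, hA, hTaug₁, hfree₁⟩ := P.exists_augment_last hf hT hTaug hfree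
    obtain ⟨P', hP'⟩ := ih P₁ hTaug₁ hfree₁
    exact ⟨P', hA ▸ hP'⟩

def reach (j : ℕ) : Set X := ⋃ w ∈ words m j, P.chain w '' (P.Aᶜ ∩ P.chainDom w)

theorem measurableSet_reach (hf : ∀ i, IsPartialIso μ E (Adom i) (f i)) (j : ℕ) :
    MeasurableSet (P.reach j) :=
  (words m j).measurableSet_biUnion fun w _ => (P.measurePreservingInjOn_chain hf w)
    |>.measurableSet_image inter_subset_right
      (P.measurableSet_A.compl.inter (P.measurableSet_chainDom hf w))

theorem compl_subset_reach (j : ℕ) : P.Aᶜ ⊆ P.reach j := fun x hx =>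
  mem_biUnion (x := []) (mem_words.2 (Nat.zero_le j)) ⟨x, ⟨hx, mem_univ x⟩, rfl⟩

theorem inter_preimage_neighbors_subset_reach (j : ℕ) :
    P.A ∩ P.θ ⁻¹' neighbors Adom f (P.reach j) ⊆ P.reach (j + 1) := by
  rintro x ⟨hxA, hx⟩
  obtain ⟨i, u, ⟨hu, hui⟩, hθx⟩ := mem_iUnion.1 hx
  obtain ⟨w, hw, x₀, hx₀, rfl⟩ := mem_iUnion₂.1 hu
  have hB : f i (P.chain w x₀) ∈ P.B := hθx ▸ ⟨x, hxA, rfl⟩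
  refine mem_biUnion (x := w ++ [i]) (by simpa using mem_words.1 hw)
    ⟨x₀, ⟨hx₀.1, P.mem_chainDom_append_singleton.2 ⟨hx₀.2, hui, hB⟩⟩, ?_⟩
  rw [chain_append_singleton, hθx, P.leftInvOn_inv hxA]

theorem neighbors_reach_diff_subset (j : ℕ) : neighbors Adom f (P.reach j) \ P.B ⊆
    ⋃ p ∈ augIndex m j, f p.2 '' (P.chain p.1 '' P.augStarts p.1 p.2) := by
  rintro _ ⟨hy, hyB⟩
  obtain ⟨i, u, ⟨hu, hui⟩, rfl⟩ := mem_iUnion.1 hy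
  obtain ⟨w, hw, x₀, hx₀, rfl⟩ := mem_iUnion₂.1 hu
  exact mem_biUnion (x := (w, i)) (mem_augIndex.2 (mem_words.1 hw))
    ⟨_, ⟨x₀, P.mem_augStarts.2 ⟨hx₀.1, hx₀.2, hui, hyB⟩, rfl⟩, rfl⟩

theorem measure_neighbors_reach_diff_le (hf : ∀ i, IsPartialIso μ E (Adom i) (f i)) (j : ℕ) :
    μ (neighbors Adom f (P.reach j) \ P.B) ≤
      ∑ p ∈ augIndex m j, μ (P.augStarts p.1 p.2) := by
  refine (measure_mono (P.neighbors_reach_diff_subset j)).trans <|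
    (measure_biUnion_finset_le _ _).trans <| Finset.sum_le_sum fun p _ => le_of_eq ?_
  have hsub : P.augStarts p.1 p.2 ⊆ P.chainDom p.1 := fun x hx => (P.mem_augStarts.1 hx).2.1
  have hm := P.measurableSet_augStarts hf p.1 p.2
  have hchain := P.measurePreservingInjOn_chain hf p.1
  rw [(hf p.2).measure_image _ (image_subset_iff.2 fun x hx => (P.mem_augStarts.1 hx).2.2.1)
    (hchain.measurableSet_image hsub hm), hchain.measure_image _ hsub hm]

theorem measure_compl_add_measure_reach_le {n : ℕ} (hn : n ≠ 0)
    (hf : ∀ i, IsPartialIso μ E (Adom i) (f i))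
    (hrow : HasMultiplicity μ Adom n) (hcol : HasMultiplicity μ (fun i => f i '' Adom i) n)
    (j : ℕ) :
    μ P.Aᶜ + μ (P.reach j) ≤
      μ (P.reach (j + 1)) + ∑ p ∈ augIndex m j, μ (P.augStarts p.1 p.2) := by
  set N := neighbors Adom f (P.reach j)
  have hN : MeasurableSet N := .iUnion fun i => (hf i).toMeasurePreservingInjOn
    |>.measurableSet_image inter_subset_right
      ((P.measurableSet_reach hf j).inter (hf i).measurableSet)
  have hNA : MeasurableSet (P.A ∩ P.θ ⁻¹' N) :=
    P.measurableSet_A.inter (P.isPartialIso.measurable hN)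
  have hNB : μ (N ∩ P.B) = μ (P.A ∩ P.θ ⁻¹' N) := by
    rw [B, inter_comm, ← image_inter_preimage, P.isPartialIso.measure_image _ inter_subset_left hNA]
  calc μ P.Aᶜ + μ (P.reach j) ≤ μ P.Aᶜ + (μ (N ∩ P.B) + μ (N \ P.B)) :=
        add_le_add le_rfl <| (measure_le_measure_neighbors hn (fun i => (hf i).measurableSet)
          (fun i => (hf i).toMeasurePreservingInjOn) hrow hcol (P.measurableSet_reach hf j)).trans
          (measure_le_inter_add_sdiff _ _ _)
    _ = μ (P.Aᶜ ∪ P.A ∩ P.θ ⁻¹' N) + μ (N \ P.B) := by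
        rw [measure_union (disjoint_compl_left.mono_right inter_subset_left) hNA, hNB, add_assoc]
    _ ≤ _ := add_le_add (measure_mono (union_subset (P.compl_subset_reach _)
        (P.inter_preimage_neighbors_subset_reach j))) (P.measure_neighbors_reach_diff_le hf j)

theorem add_one_mul_measure_compl_le [IsProbabilityMeasure μ] {n : ℕ} (hn : n ≠ 0)
    (hf : ∀ i, IsPartialIso μ E (Adom i) (f i))
    (hrow : HasMultiplicity μ Adom n) (hcol : HasMultiplicity μ (fun i => f i '' Adom i) n)
    (K : ℕ) :
    (K + 1) * μ P.Aᶜ ≤ 1 + K * ∑ p ∈ augIndex m K, μ (P.augStarts p.1 p.2) := by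
  set Λ := ∑ p ∈ augIndex m K, μ (P.augStarts p.1 p.2)
  have hgrowth : ∀ j ≤ K, (j + 1) * μ P.Aᶜ ≤ μ (P.reach j) + j * Λ := by
    intro j hj
    induction j with
    | zero => simpa using measure_mono (P.compl_subset_reach 0)
    | succ j ih =>
      have hstep := (P.measure_compl_add_measure_reach_le hn hf hrow hcol j).trans <|
        add_le_add le_rfl <| Finset.sum_le_sum_of_subset <|
          augIndex_mono (Nat.le_of_succ_le hj)
      calc ((j + 1 : ℕ) + 1) * μ P.Aᶜ = μ P.Aᶜ + (j + 1) * μ P.Aᶜ := by push_cast; ring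
        _ ≤ μ P.Aᶜ + μ (P.reach j) + j * Λ := by
          rw [add_assoc]; exact add_le_add le_rfl (ih (Nat.le_of_succ_le hj))
        _ ≤ μ (P.reach (j + 1)) + Λ + j * Λ := add_le_add hstep le_rfl
        _ = μ (P.reach (j + 1)) + (j + 1 : ℕ) * Λ := by push_cast; ring
  calc (K + 1) * μ P.Aᶜ ≤ μ (P.reach K) + K * Λ := hgrowth K le_rfl
    _ ≤ 1 + K * Λ := add_le_add prob_le_one le_rfl

theorem sum_measure_augStarts_le (K : ℕ) :
    ∑ p ∈ augIndex m K, μ (P.augStarts p.1 p.2) ≤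
      (augIndex m K).card * ∑ p ∈ augIndex m K, μ (P.shortestAugStarts p.1 p.2) := by
  rw [← nsmul_eq_mul, ← Finset.sum_const]
  refine Finset.sum_le_sum fun p hp => (measure_mono fun x hx => ?_).trans
    (measure_biUnion_finset_le _ _)
  obtain ⟨v, hv, hxv⟩ := P.exists_mem_shortestAugStarts hx
  exact mem_biUnion (x := (v, p.2)) (mem_augIndex.2 (hv.trans (mem_augIndex.1 hp))) hxv

theorem exists_collisionFree_subset_augStarts (hf : ∀ i, IsPartialIso μ E (Adom i) (f i))
    (w : List (Fin m)) (i : Fin m) :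
    ∃ T ⊆ P.augStarts w i, MeasurableSet T ∧ CollisionFree P.chain w.inits.toFinset T ∧
      μ (P.shortestAugStarts w i) ≤ ((w.length + 1) ^ 2 + 1) * μ T := by
  obtain ⟨T, hTS, hT, hfree, hμ⟩ := exists_collisionFree_subset
    (P.measurableSet_shortestAugStarts hf w i)
    (fun u hu => (P.measurePreservingInjOn_chain hf u).mono fun x hx =>
      P.chainDom_subset_of_prefix (List.mem_inits_toFinset.1 hu) (P.mem_augStarts.1 hx.1).2.1)
    fun x hx => P.collisionFree_singleton_of_mem_shortestAugStarts hx
  refine ⟨T, hTS.trans sdiff_subset, hT, hfree, hμ.trans ?_⟩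
  gcongr
  exact_mod_cast (List.toFinset_card_le _).trans (List.length_inits w).le

theorem exists_add_le_of_le_measure_compl [IsProbabilityMeasure μ] {n : ℕ} (hn : n ≠ 0)
    (hf : ∀ i, IsPartialIso μ E (Adom i) (f i))
    (hrow : HasMultiplicity μ Adom n) (hcol : HasMultiplicity μ (fun i => f i '' Adom i) n)
    {η : ℝ≥0∞} (hη : η ≠ 0) : ∃ c : ℝ≥0∞, c ≠ 0 ∧ ∀ P : Piece μ E Adom f, η ≤ μ P.Aᶜ →
      ∃ P' : Piece μ E Adom f, μ P.A + c ≤ μ P'.A := by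
  obtain ⟨K, hK⟩ := ENNReal.exists_nat_mul_gt hη ENNReal.ofNat_ne_top (b := 2)
  set W := augIndex m K
  set Q : ℕ := W.card * (K * W.card) * ((K + 1) ^ 2 + 1)
  refine ⟨(Q : ℝ≥0∞)⁻¹, ENNReal.inv_ne_zero.2 (ENNReal.natCast_ne_top Q), fun P hP => ?_⟩
  have hsum : 1 ≤ ∑ p ∈ W, K * W.card * μ (P.shortestAugStarts p.1 p.2) := by
    refine ENNReal.le_of_add_le_add_left ENNReal.one_ne_top ?_
    calc 1 + 1 = (2 : ℝ≥0∞) := one_add_one_eq_two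
      _ ≤ (K + 1) * μ P.Aᶜ := hK.le.trans (mul_le_mul' le_self_add hP)
      _ ≤ 1 + K * ∑ p ∈ W, μ (P.augStarts p.1 p.2) :=
        P.add_one_mul_measure_compl_le hn hf hrow hcol K
      _ ≤ 1 + ∑ p ∈ W, K * W.card * μ (P.shortestAugStarts p.1 p.2) := by
        rw [← Finset.mul_sum, mul_assoc]
        gcongr
        exact P.sum_measure_augStarts_le K
  obtain ⟨⟨w, i⟩, hp, hwi⟩ := ENNReal.exists_le_card_mul_of_le_sum one_ne_zero hsum
  obtain ⟨T, hTaug, hT, hfree, hμT⟩ := P.exists_collisionFree_subset_augStarts hf w i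
  obtain ⟨P', hP'⟩ := P.exists_add_measure_le hf hT hTaug hfree
  refine ⟨P', le_trans (add_le_add le_rfl ?_) hP'⟩
  refine (ENNReal.inv_le_iff_le_mul (fun h => absurd h (measure_ne_top μ T))
    fun h => absurd h (ENNReal.natCast_ne_top Q)).2 (hwi.trans ?_)
  calc (W.card : ℝ≥0∞) * (K * W.card * μ (P.shortestAugStarts w i))
      ≤ W.card * (K * W.card * (((w.length + 1) ^ 2 + 1) * μ T)) := by gcongr
    _ ≤ W.card * (K * W.card * (((K + 1) ^ 2 + 1) * μ T)) := by
      gcongr; exact_mod_cast mem_augIndex.1 hp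
    _ = Q * μ T := by push_cast [Q]; ring

end Piece

end Piece

theorem exists_large_piece_general
    {X : Type*} [MeasurableSpace X] [StandardBorelSpace X]
    (μ : Measure X) [IsProbabilityMeasure μ]
    (E : Set (X × X))
    (m n : ℕ) (hn : 1 ≤ n) (Adom : Fin m → Set X) (f : Fin m → X → X)
    (hiso : ∀ i, IsPartialIso μ E (Adom i) (f i))
    (hrow : ∀ᵐ x ∂μ, ∑ i : Fin m, (Adom i).indicator (fun _ => (1 : ℝ≥0∞)) x = (n : ℝ≥0∞))
    (hcol : ∀ᵐ y ∂μ, ∑ i : Fin m,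
      (f i '' Adom i).indicator (fun _ => (1 : ℝ≥0∞)) y = (n : ℝ≥0∞))
    (ε : ℝ≥0∞) (hε : 0 < ε) :
    ∃ (A : Set X) (θ : X → X),
      IsPartialIso μ E A θ ∧
      (∀ x ∈ A, ∃ i, x ∈ Adom i ∧ f i x = θ x) ∧
      1 - ε < μ A := by
  have := nonempty_of_isProbabilityMeasure μ
  by_contra! hsmall
  have hη : 1 - (1 - ε) ≠ 0 :=
    (tsub_pos_of_lt (ENNReal.sub_lt_self ENNReal.one_ne_top one_ne_zero hε.ne')).ne'
  obtain ⟨c, hc, hgain⟩ := Piece.exists_add_le_of_le_measure_compl (by omega) hiso hrow hcol hη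
  have hgrow : ∀ k : ℕ, ∃ P : Piece μ E Adom f, k * c ≤ μ P.A := by
    intro k
    induction k with
    | zero => exact ⟨.empty, by simp⟩
    | succ k ih =>
      obtain ⟨P, hP⟩ := ih
      obtain ⟨P', hP'⟩ := hgain P <| by
        rw [prob_compl_eq_one_sub P.measurableSet_A]
        exact tsub_le_tsub_left (hsmall P.A P.θ P.isPartialIso P.subordinate) 1
      exact ⟨P', by push_cast; rw [add_mul, one_mul]; exact (add_le_add hP le_rfl).trans hP'⟩
  obtain ⟨k, hk⟩ := ENNReal.exists_nat_mul_gt hc ENNReal.one_ne_top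
  obtain ⟨P, hP⟩ := hgrow k
  exact (hk.trans_le (hP.trans prob_le_one)).false

/-- for any DSE `Φ` of multiplicity `n` on a standard probability space and
any `ε > 0`, there exists a piece `θ : A → B` (a partial isomorphism with graph contained
in the support `H = ⋃_i graph φ_i` of `M(Φ)`) such that `μ(A) > 1 − ε`. -/
theorem exists_large_piece
    {X : Type*} [MeasurableSpace X] [StandardBorelSpace X]
    (μ : Measure X) [IsProbabilityMeasure μ]
    (E : Set (X × X)) (hE : Equivalence fun x y => (x, y) ∈ E)
    (hcnt : ∀ x, {y | (x, y) ∈ E}.Countable)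
    (m n : ℕ) (hn : 1 ≤ n) (Adom : Fin m → Set X) (f : Fin m → X → X)
    (hiso : ∀ i, IsPartialIso μ E (Adom i) (f i))
    (hrow : ∀ᵐ x ∂μ, ∑ i : Fin m, (Adom i).indicator (fun _ => (1 : ℝ≥0∞)) x = (n : ℝ≥0∞))
    (hcol : ∀ᵐ y ∂μ, ∑ i : Fin m,
      (f i '' Adom i).indicator (fun _ => (1 : ℝ≥0∞)) y = (n : ℝ≥0∞))
    (ε : ℝ≥0∞) (hε : 0 < ε) :
    ∃ (A : Set X) (θ : X → X),
      IsPartialIso μ E A θ ∧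
      (∀ x ∈ A, ∃ i, x ∈ Adom i ∧ f i x = θ x) ∧
      1 - ε < μ A :=
  exists_large_piece_general μ E m n hn Adom f hiso hrow hcol ε hε
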